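/- Let φ : K → X be a Lipschitz map from a measurable set K ⊆ ℝⁿ into a metric space X, and suppose φ admits a metric differential md φ_x at a point x ∈ K, i.e. a seminorm on ℝⁿ with d(φ(x+εv), φ(x)) = md φ_x(εv) + o(|εv|). Define φ̃ : K × [0,1] → CX into the Euclidean cone by φ̃(x,t) = [(φ(x), t)]. Then for r ∈ (0,1] the metric differential of φ̃ at (x,r) exists and is given by md φ̃_{(x,r)}(v,s) = sqrt( r² · (md φ_x(v))² + s² ) for all (v,s) ∈ ℝⁿ × ℝ. -/

import Mathlib

theorem sn_bound {n : ℕ} (N : Seminorm ℝ (EuclideanSpace ℝ (Fin n))) :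
    ∃ C : ℝ, 0 ≤ C ∧ ∀ v, N v ≤ C * ‖v‖ := by
  classical
  refine ⟨∑ i, N (EuclideanSpace.single i (1:ℝ)), by positivity, fun v => ?_⟩
  have hv : v = ∑ i, v i • EuclideanSpace.single i (1:ℝ) := by
    ext j
    rw [WithLp.ofLp_sum, Finset.sum_apply]
    simp [EuclideanSpace.single_apply]
  calc N v = N (∑ i, v i • EuclideanSpace.single i (1:ℝ)) := by rw [← hv]
    _ ≤ ∑ i, N (v i • EuclideanSpace.single i (1:ℝ)) :=
        Finset.le_sum_of_subadditive N (map_zero N).le (map_add_le_add N) _ _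
    _ = ∑ i, |v i| * N (EuclideanSpace.single i (1:ℝ)) := by
        simp [map_smul_eq_mul, Real.norm_eq_abs]
    _ ≤ ∑ i, ‖v‖ * N (EuclideanSpace.single i (1:ℝ)) := by
        refine Finset.sum_le_sum fun i _ => ?_
        have h1 : |v i| ≤ ‖v‖ := by
          rw [EuclideanSpace.norm_eq v,
            show |v i| = Real.sqrt (‖v i‖^2) by rw [Real.sqrt_sq_eq_abs]; simp]
          exact Real.sqrt_le_sqrt (Finset.single_le_sum
            (f := fun j => ‖v j‖^2) (fun j _ => by positivity) (Finset.mem_univ i))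
        exact mul_le_mul_of_nonneg_right h1 (apply_nonneg N _)
    _ = (∑ i, N (EuclideanSpace.single i (1:ℝ))) * ‖v‖ := by
        rw [Finset.sum_mul]; simp [mul_comm]

theorem sqrt_diff {a b : ℝ} (ha : 0 ≤ a) (hb : 0 ≤ b) :
    |Real.sqrt a - Real.sqrt b| ≤ Real.sqrt (|a - b|) := by
  have key : ∀ a b : ℝ, 0 ≤ b → b ≤ a → Real.sqrt a - Real.sqrt b ≤ Real.sqrt (a - b) := by
    intro a b hb h
    have h2 : a ≤ (Real.sqrt b + Real.sqrt (a-b))^2 := by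
      nlinarith [Real.sq_sqrt hb, Real.sq_sqrt (sub_nonneg.2 h),
        mul_nonneg (Real.sqrt_nonneg b) (Real.sqrt_nonneg (a-b))]
    have h3 : Real.sqrt a ≤ Real.sqrt b + Real.sqrt (a-b) := by
      calc Real.sqrt a ≤ Real.sqrt ((Real.sqrt b + Real.sqrt (a-b))^2) := Real.sqrt_le_sqrt h2
        _ = Real.sqrt b + Real.sqrt (a-b) := Real.sqrt_sq (by positivity)
    linarith
  rcases le_total b a with h | h
  · rw [abs_of_nonneg (sub_nonneg.2 (Real.sqrt_le_sqrt h)), abs_of_nonneg (sub_nonneg.2 h)]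
    exact key a b hb h
  · rw [abs_of_nonpos (sub_nonpos.2 (Real.sqrt_le_sqrt h)), abs_of_nonpos (sub_nonpos.2 h),
      neg_sub, neg_sub]
    exact key b a ha h



/-- The Euclidean cone distance (formula on `X × ℝ`; for parameters in `[0,1]` this is the
metric of the Euclidean cone `CX`). -/
noncomputable def coneD {X : Type*} [MetricSpace X] (p q : X × ℝ) : ℝ :=
  if dist p.1 q.1 < Real.pi then
    Real.sqrt (p.2 ^ 2 + q.2 ^ 2 - 2 * p.2 * q.2 * Real.cos (dist p.1 q.1))
  else p.2 + q.2

set_option maxHeartbeats 1000000 in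
/-- If a Lipschitz map `φ : K → X`, `K ⊆ ℝⁿ`, admits the metric differential `N` at `x ∈ K`
(i.e. `d(φ(q),φ(x)) = N(q-x) + o(|q-x|)` as `q → x` in `K`), then for `r ∈ (0,1]` the cone
map `φ̃(y,t) = [(φ(y),t)]` into the Euclidean cone `CX` admits at `(x,r)` the metric
differential `(v,s) ↦ sqrt(r²·N(v)² + s²)`. -/
theorem stmt_17 {n : ℕ} {X : Type*} [MetricSpace X]
    (K : Set (EuclideanSpace ℝ (Fin n))) (φ : EuclideanSpace ℝ (Fin n) → X)
    (L : NNReal) (hφ : LipschitzOnWith L φ K)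
    (x : EuclideanSpace ℝ (Fin n)) (hx : x ∈ K)
    (N : Seminorm ℝ (EuclideanSpace ℝ (Fin n)))
    (hmd : Filter.Tendsto
      (fun q : EuclideanSpace ℝ (Fin n) => (dist (φ q) (φ x) - N (q - x)) / ‖q - x‖)
      (nhdsWithin x (K \ {x})) (nhds 0))
    (r : ℝ) (hr0 : 0 < r) (hr1 : r ≤ 1) :
    Filter.Tendsto
      (fun q : (EuclideanSpace ℝ (Fin n)) × ℝ =>
        (coneD ((φ q.1, q.2) : X × ℝ) (φ x, r)
          - Real.sqrt (r ^ 2 * (N (q.1 - x)) ^ 2 + (q.2 - r) ^ 2)) / ‖q - (x, r)‖)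
      (nhdsWithin (x, r) ((K ×ˢ Set.Icc (0 : ℝ) 1) \ {(x, r)})) (nhds 0) := by
  classical
  obtain ⟨C, hC0, hC⟩ := sn_bound N
  set p : (EuclideanSpace ℝ (Fin n)) × ℝ := (x, r) with hp
  set F := nhdsWithin p ((K ×ˢ Set.Icc (0 : ℝ) 1) \ {p}) with hF
  set R₀ : EuclideanSpace ℝ (Fin n) → ℝ := fun y =>
    if y = x then 0 else |dist (φ y) (φ x) - N (y - x)| / ‖y - x‖ with hR₀
  -- R₀ tends to 0 along 𝓝[K] x
  have hR1 : Filter.Tendsto R₀ (nhdsWithin x K) (nhds 0) := by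
    have hle : nhdsWithin x K ≤ nhdsWithin x (K \ {x}) ⊔ pure x := by
      have hsub : K ⊆ (K \ {x}) ∪ {x} := fun y hy => by
        by_cases h : y = x
        · exact Or.inr h
        · exact Or.inl ⟨hy, h⟩
      calc nhdsWithin x K ≤ nhdsWithin x ((K \ {x}) ∪ {x}) := nhdsWithin_mono x hsub
        _ = nhdsWithin x (K \ {x}) ⊔ nhdsWithin x {x} := nhdsWithin_union x _ _
        _ = nhdsWithin x (K \ {x}) ⊔ pure x := by rw [nhdsWithin_singleton]
    refine Filter.Tendsto.mono_left ?_ hle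
    rw [Filter.tendsto_sup]
    constructor
    · have habs := hmd.abs
      rw [abs_zero] at habs
      refine habs.congr' ?_
      filter_upwards [self_mem_nhdsWithin] with y hy
      have hyx : y ≠ x := hy.2
      rw [hR₀]
      simp only [if_neg hyx, abs_div, abs_norm]
    · have := tendsto_pure_nhds R₀ x
      simpa [hR₀] using this
  have hfst : Filter.Tendsto (fun q : (EuclideanSpace ℝ (Fin n)) × ℝ => q.1) F
      (nhdsWithin x K) := by
    refine ContinuousWithinAt.tendsto_nhdsWithin
      (continuous_fst.continuousWithinAt) (fun q hq => hq.1.1)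
  have hR : Filter.Tendsto (fun q : (EuclideanSpace ℝ (Fin n)) × ℝ => R₀ q.1) F (nhds 0) :=
    hR1.comp hfst
  have hε : Filter.Tendsto (fun q : (EuclideanSpace ℝ (Fin n)) × ℝ => ‖q - p‖) F (nhds 0) := by
    have h0 : Filter.Tendsto (fun q : (EuclideanSpace ℝ (Fin n)) × ℝ => ‖q - p‖)
        (nhds p) (nhds ‖p - p‖) :=
      ((continuous_id.sub continuous_const).norm).tendsto p
    rw [sub_self, norm_zero] at h0
    exact h0.mono_left nhdsWithin_le_nhds
  set G : (EuclideanSpace ℝ (Fin n)) × ℝ → ℝ := fun q =>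
    5/48 * (L:ℝ)^4 * ‖q - p‖^2 + (L:ℝ)^2 * ‖q - p‖ + ((L:ℝ) + C) * R₀ q.1 with hGdef
  have hG : Filter.Tendsto G F (nhds 0) := by
    have := (((hε.pow 2).const_mul (5/48 * (L:ℝ)^4)).add
      (hε.const_mul ((L:ℝ)^2))).add (hR.const_mul ((L:ℝ) + C))
    simpa [hGdef, mul_comm] using this
  have hsqrtG : Filter.Tendsto (fun q => Real.sqrt (G q)) F (nhds 0) := by
    have := (Real.continuous_sqrt.tendsto 0).comp hG
    simpa [Function.comp_def] using this
  refine squeeze_zero_norm' ?_ hsqrtG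
  have h2 : ∀ᶠ q in F, ‖q - p‖ < 1/((L:ℝ)+1) :=
    hε.eventually (gt_mem_nhds (by positivity))
  filter_upwards [self_mem_nhdsWithin, h2] with q hq hqε
  obtain ⟨⟨hqK, hqt⟩, hqne⟩ := hq
  have hqnep : q ≠ p := fun h => hqne (by simp [h])
  set t := q.2 with htdef
  set v := q.1 - x with hvdef
  set D := dist (φ q.1) (φ x) with hDdef
  set ε := ‖q - p‖ with hεdef
  have hεpos : 0 < ε := by
    rw [hεdef, norm_pos_iff, sub_ne_zero]
    exact hqnep
  have hv_le : ‖v‖ ≤ ε := by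
    have := norm_fst_le (q - p)
    simpa [hp, hvdef] using this
  have ht_le : |t - r| ≤ ε := by
    have := norm_snd_le (q - p)
    simpa [hp, htdef, Real.norm_eq_abs] using this
  have ht0 : 0 ≤ t := hqt.1
  have ht1 : t ≤ 1 := hqt.2
  have hD0 : (0:ℝ) ≤ D := dist_nonneg
  have hD_le : D ≤ (L:ℝ) * ε := by
    calc D ≤ (L:ℝ) * dist q.1 x := hφ.dist_le_mul q.1 hqK x hx
      _ = (L:ℝ) * ‖v‖ := by rw [dist_eq_norm, hvdef]
      _ ≤ (L:ℝ) * ε := by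
        exact mul_le_mul_of_nonneg_left hv_le L.2
  have hD1 : D ≤ 1 := by
    have h3 : (L:ℝ) * ε ≤ (L:ℝ) * (1/((L:ℝ)+1)) :=
      mul_le_mul_of_nonneg_left hqε.le L.2
    have h4 : (L:ℝ) * (1/((L:ℝ)+1)) ≤ 1 := by
      rw [mul_one_div, div_le_one (by positivity)]; linarith [L.2]
    linarith
  have hDpi : D < Real.pi := lt_of_le_of_lt hD1 (by linarith [Real.pi_gt_three])
  set Nv := N v with hNvdef
  have hNv0 : 0 ≤ Nv := apply_nonneg N v
  have hNv_le : Nv ≤ C * ε := le_trans (hC v) (mul_le_mul_of_nonneg_left hv_le hC0)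
  -- the cone distance formula
  have hcone : coneD ((φ q.1, q.2) : X × ℝ) (φ x, r)
      = Real.sqrt (t^2 + r^2 - 2*t*r*Real.cos D) := by
    rw [coneD, if_pos hDpi]
  set A := t^2 + r^2 - 2*t*r*Real.cos D with hAdef
  set B := r^2 * Nv^2 + (t - r)^2 with hBdef
  have hA0 : 0 ≤ A := by
    have := Real.cos_le_one D
    nlinarith [mul_nonneg ht0 hr0.le, sq_nonneg (t - r)]
  have hB0 : 0 ≤ B := by positivity
  set c := Real.cos D - (1 - D^2/2) with hcdef
  have hcbound : |c| ≤ D^4 * (5/96) := by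
    have := Real.cos_bound (x := D) (by rwa [abs_of_nonneg hD0])
    rwa [abs_of_nonneg hD0] at this
  have hDN : |D - Nv| ≤ R₀ q.1 * ε := by
    by_cases h : q.1 = x
    · have : D = 0 := by rw [hDdef, h, dist_self]
      rw [this, hNvdef, hvdef, h, sub_self, map_zero, sub_zero, abs_zero, hR₀]
      simp [h]
    · have hvpos : 0 < ‖v‖ := by rw [hvdef, norm_pos_iff, sub_ne_zero]; exact h
      rw [hR₀]
      simp only [if_neg h, ← hvdef, ← hDdef]
      calc |D - Nv| = (|D - Nv| / ‖v‖) * ‖v‖ := (div_mul_cancel₀ _ hvpos.ne').symm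
        _ ≤ (|D - Nv| / ‖v‖) * ε := by
            exact mul_le_mul_of_nonneg_left hv_le (by positivity)
  have hDNl := abs_le.1 hDN
  have hcl := abs_le.1 hcbound
  have htl := abs_le.1 ht_le
  have hR₀nn : 0 ≤ R₀ q.1 := by
    rw [hR₀]; dsimp only; split
    · exact le_rfl
    · positivity
  -- key estimate on |A - B|
  have hABeq : A - B = r*D^2*(t-r) + r^2*(D-Nv)*(D+Nv) + (2*t*r)*(-c) := by
    rw [hAdef, hBdef, hcdef]; ring
  have hAB : |A - B| ≤ ε^2 * G q := by
    have e1 : |r*D^2*(t-r)| ≤ (L:ℝ)^2*ε^3 := by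
      rw [abs_mul, abs_mul, abs_of_nonneg hr0.le, abs_of_nonneg (sq_nonneg D)]
      calc r * D^2 * |t-r| ≤ 1 * ((L:ℝ)*ε)^2 * ε := by
            gcongr <;> first | assumption | positivity
        _ = (L:ℝ)^2*ε^3 := by ring
    have e2 : |r^2*(D-Nv)*(D+Nv)| ≤ ((L:ℝ)+C) * R₀ q.1 * ε^2 := by
      rw [abs_mul, abs_mul, abs_of_nonneg (sq_nonneg r), abs_of_nonneg (by linarith : 0 ≤ D+Nv)]
      have hr2 : r^2 ≤ 1 := by simpa using pow_le_pow_left₀ hr0.le hr1 2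
      have hDNv : D + Nv ≤ ((L:ℝ)+C)*ε := by rw [add_mul]; exact add_le_add hD_le hNv_le
      calc r^2 * |D-Nv| * (D+Nv) ≤ 1 * (R₀ q.1 * ε) * (((L:ℝ)+C)*ε) := by
            gcongr <;> first | assumption | positivity
        _ = ((L:ℝ)+C) * R₀ q.1 * ε^2 := by ring
    have e3 : |(2*t*r)*(-c)| ≤ 5/48*(L:ℝ)^4*ε^4 := by
      rw [abs_mul, abs_neg, abs_of_nonneg (by positivity : (0:ℝ) ≤ 2*t*r)]
      have hc2 : |c| ≤ ((L:ℝ)*ε)^4 * (5/96) := le_trans hcbound (by gcongr)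
      calc 2*t*r*|c| ≤ 2*1*1*(((L:ℝ)*ε)^4 * (5/96)) := by
            gcongr <;> first | assumption | positivity
        _ = 5/48*(L:ℝ)^4*ε^4 := by ring
    calc |A - B| ≤ |r*D^2*(t-r)| + |r^2*(D-Nv)*(D+Nv)| + |(2*t*r)*(-c)| := by
          rw [hABeq]; exact abs_add_three _ _ _
      _ ≤ (L:ℝ)^2*ε^3 + ((L:ℝ)+C) * R₀ q.1 * ε^2 + 5/48*(L:ℝ)^4*ε^4 :=
          add_le_add (add_le_add e1 e2) e3
      _ = ε^2 * G q := by simp only [hGdef]; ring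
  have hGnn : 0 ≤ G q := by
    have := (abs_nonneg (A - B)).trans hAB
    positivity
  have h5 : |Real.sqrt A - Real.sqrt B| ≤ ε * Real.sqrt (G q) := by
    calc |Real.sqrt A - Real.sqrt B| ≤ Real.sqrt (|A - B|) := sqrt_diff hA0 hB0
      _ ≤ Real.sqrt (ε^2 * G q) := Real.sqrt_le_sqrt hAB
      _ = ε * Real.sqrt (G q) := by
          rw [Real.sqrt_mul (sq_nonneg ε), Real.sqrt_sq hεpos.le]
  rw [Real.norm_eq_abs, hcone, abs_div, abs_of_nonneg hεpos.le]
  rw [div_le_iff₀ hεpos]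
  calc |Real.sqrt A - Real.sqrt (r^2 * Nv^2 + (t-r)^2)| ≤ ε * Real.sqrt (G q) := h5
    _ = Real.sqrt (G q) * ε := mul_comm _ _
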